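/- arXiv:2504.18487 — 5 statements merged into one kernel-verified Lean document; each statement's English description precedes it below -/
import Mathlib

section
/- For every real s ≥ 1 and every integer N ≥ 2, one has α_{N,s} ≤ α_{N+1,s}; that is, the sequence N ↦ α_{N,s} is nondecreasing in N. -/
/-!
Deleting one point of an `(N+1)`-point configuration leaves an `N`-point configuration, whose
quotient is at least `α_{N,s}`. Summing these `N + 1` inequalities, every pair term of the
numerator is counted `N - 1` times and every weight `‖x_k‖^(s-1)` of the denominator `N` times,
so the factor `N - 1` cancels and the `(N+1)`-point quotient is at least `α_{N,s}` as well.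
-/

open MeasureTheory

noncomputable section

/-- `α_{N,s}`: the infimum over `N`-tuples of pairwise distinct points of `ℝ³` of the
quotient `(∑_{j<k} (‖x_j‖^s + ‖x_k‖^s)/‖x_j - x_k‖) / ((N-1) ∑_k ‖x_k‖^(s-1))`. -/
noncomputable def alphaNS (N : ℕ) (s : ℝ) : ℝ :=
  sInf { c : ℝ | ∃ x : Fin N → EuclideanSpace ℝ (Fin 3), Function.Injective x ∧
    c = (∑ j : Fin N, ∑ k : Fin N,
          if j < k then (‖x j‖ ^ s + ‖x k‖ ^ s) / ‖x j - x k‖ else 0) /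
        (((N : ℝ) - 1) * ∑ k : Fin N, ‖x k‖ ^ (s - 1)) }

namespace Fin

variable {M : Type*} [AddCommGroup M] {n : ℕ}

theorem sum_succAbove_eq_sub (f : Fin (n + 1) → M) (i : Fin (n + 1)) :
    ∑ j : Fin n, f (i.succAbove j) = ∑ a, f a - f i := by
  rw [sum_univ_succAbove f i, add_sub_cancel_left]

theorem sum_sum_succAbove (f : Fin (n + 1) → M) :
    ∑ i : Fin (n + 1), ∑ j : Fin n, f (i.succAbove j) = n • ∑ a, f a := by
  simp only [sum_succAbove_eq_sub, Finset.sum_sub_distrib, Finset.sum_const, Finset.card_univ,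
    Fintype.card_fin, succ_nsmul, add_sub_cancel_right]

theorem sum_sum_sum_succAbove {F : Fin (n + 1) → Fin (n + 1) → ℝ} (hF : ∀ a, F a a = 0) :
    ∑ i : Fin (n + 1), ∑ j : Fin n, ∑ k : Fin n, F (i.succAbove j) (i.succAbove k) =
      ((n : ℝ) - 1) * ∑ a, ∑ b, F a b := by
  have hcol : ∑ i : Fin (n + 1), ∑ j : Fin n, F (i.succAbove j) i = ∑ a, ∑ b, F a b := by
    rw [Finset.sum_comm (f := F)]
    exact Finset.sum_congr rfl fun i _ => by rw [sum_succAbove_eq_sub (F · i), hF, sub_zero]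
  have hrow : ∀ i : Fin (n + 1), ∑ j : Fin n, ∑ k : Fin n, F (i.succAbove j) (i.succAbove k) =
      ∑ j : Fin n, ∑ b, F (i.succAbove j) b - ∑ j : Fin n, F (i.succAbove j) i := fun i => by
    rw [← Finset.sum_sub_distrib]
    exact Finset.sum_congr rfl fun j _ => sum_succAbove_eq_sub (F _) i
  rw [Finset.sum_congr rfl fun i _ => hrow i, Finset.sum_sub_distrib, hcol,
    sum_sum_succAbove fun a => ∑ b, F a b, nsmul_eq_mul]
  ring

end Fin

section Configuration

variable {E : Type*} [NormedAddCommGroup E] {n : ℕ}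

def pairTerm (s : ℝ) (x : Fin n → E) (j k : Fin n) : ℝ :=
  if j < k then (‖x j‖ ^ s + ‖x k‖ ^ s) / ‖x j - x k‖ else 0

def pairEnergy (s : ℝ) (x : Fin n → E) : ℝ :=
  ∑ j, ∑ k, pairTerm s x j k

def normWeight (s : ℝ) (x : Fin n → E) : ℝ :=
  ∑ k, ‖x k‖ ^ (s - 1)

theorem pairEnergy_nonneg (s : ℝ) (x : Fin n → E) : 0 ≤ pairEnergy s x := by
  refine Finset.sum_nonneg fun j _ => Finset.sum_nonneg fun k _ => ?_
  unfold pairTerm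
  split_ifs
  · positivity
  · exact le_rfl

theorem normWeight_nonneg (s : ℝ) (x : Fin n → E) : 0 ≤ normWeight s x :=
  Finset.sum_nonneg fun _ _ => by positivity

theorem normWeight_pos (s : ℝ) (hn : 2 ≤ n) {x : Fin n → E} (hx : Function.Injective x) :
    0 < normWeight s x := by
  have hne : x ⟨0, by omega⟩ ≠ x ⟨1, by omega⟩ := hx.ne (by simp [Fin.ext_iff])
  obtain ⟨k, hk⟩ : ∃ k, x k ≠ 0 := by
    by_contra! h
    exact hne ((h _).trans (h _).symm)
  exact Finset.sum_pos' (fun _ _ => by positivity)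
    ⟨k, Finset.mem_univ k, Real.rpow_pos_of_pos (norm_pos_iff.mpr hk) _⟩

theorem pairTerm_comp_succAbove (s : ℝ) (x : Fin (n + 1) → E) (i : Fin (n + 1)) (j k : Fin n) :
    pairTerm s (x ∘ i.succAbove) j k = pairTerm s x (i.succAbove j) (i.succAbove k) := by
  simp only [pairTerm, Function.comp_apply, Fin.succAbove_lt_succAbove_iff]

theorem sum_pairEnergy_comp_succAbove (s : ℝ) (x : Fin (n + 1) → E) :
    ∑ i : Fin (n + 1), pairEnergy s (x ∘ i.succAbove) = ((n : ℝ) - 1) * pairEnergy s x := by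
  simp only [pairEnergy, pairTerm_comp_succAbove]
  exact Fin.sum_sum_sum_succAbove fun a => if_neg (lt_irrefl a)

theorem sum_normWeight_comp_succAbove (s : ℝ) (x : Fin (n + 1) → E) :
    ∑ i : Fin (n + 1), normWeight s (x ∘ i.succAbove) = n * normWeight s x := by
  simp only [normWeight, Function.comp_apply, Fin.sum_sum_succAbove fun a => ‖x a‖ ^ (s - 1),
    nsmul_eq_mul]

end Configuration

theorem alphaNS_eq (N : ℕ) (s : ℝ) :
    alphaNS N s = sInf { c : ℝ | ∃ x : Fin N → EuclideanSpace ℝ (Fin 3), Function.Injective x ∧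
      c = pairEnergy s x / (((N : ℝ) - 1) * normWeight s x) } :=
  rfl

theorem alphaNS_le {N : ℕ} (hN : 1 ≤ N) (s : ℝ) {x : Fin N → EuclideanSpace ℝ (Fin 3)}
    (hx : Function.Injective x) :
    alphaNS N s ≤ pairEnergy s x / (((N : ℝ) - 1) * normWeight s x) := by
  have hN' : (0 : ℝ) ≤ N - 1 := sub_nonneg.mpr (by exact_mod_cast hN)
  refine csInf_le ⟨0, ?_⟩ ⟨x, hx, rfl⟩
  rintro _ ⟨y, -, rfl⟩
  exact div_nonneg (pairEnergy_nonneg s y) (mul_nonneg hN' (normWeight_nonneg s y))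

theorem alphaNS_mul_le {N : ℕ} (hN : 2 ≤ N) (s : ℝ) {x : Fin N → EuclideanSpace ℝ (Fin 3)}
    (hx : Function.Injective x) :
    alphaNS N s * (((N : ℝ) - 1) * normWeight s x) ≤ pairEnergy s x := by
  have hN' : (0 : ℝ) < N - 1 := by linarith [(Nat.ofNat_le_cast (α := ℝ)).mpr hN]
  exact (le_div_iff₀ (mul_pos hN' (normWeight_pos s hN hx))).mp (alphaNS_le (by omega) s hx)

theorem alphaNS_mul_le_succ {N : ℕ} (hN : 2 ≤ N) (s : ℝ)
    {x : Fin (N + 1) → EuclideanSpace ℝ (Fin 3)} (hx : Function.Injective x) :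
    alphaNS N s * (N * normWeight s x) ≤ pairEnergy s x := by
  have hN' : (0 : ℝ) < N - 1 := by linarith [(Nat.ofNat_le_cast (α := ℝ)).mpr hN]
  have hsum := Finset.sum_le_sum fun i (_ : i ∈ Finset.univ) =>
    alphaNS_mul_le hN s (hx.comp (Fin.succAbove_right_injective (p := i)))
  rw [← Finset.mul_sum, ← Finset.mul_sum, sum_normWeight_comp_succAbove,
    sum_pairEnergy_comp_succAbove] at hsum
  refine le_of_mul_le_mul_left ?_ hN'
  linarith

theorem alphaNS_mono_general (s : ℝ) (N : ℕ) (hN : 2 ≤ N) :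
    alphaNS N s ≤ alphaNS (N + 1) s := by
  rw [alphaNS_eq (N + 1)]
  refine le_csInf ⟨_, _, (Fin.valEmbedding.trans (Infinite.natEmbedding _)).injective, rfl⟩ ?_
  rintro _ ⟨x, hx, rfl⟩
  rw [Nat.cast_add_one, add_sub_cancel_right,
    le_div_iff₀ (mul_pos (Nat.cast_pos.mpr (by omega)) (normWeight_pos s (by omega) hx))]
  exact alphaNS_mul_le_succ hN s hx

/-- For every real `s ≥ 1` and every integer `N ≥ 2`, `α_{N,s} ≤ α_{N+1,s}`. -/
theorem alphaNS_mono (s : ℝ) (hs : 1 ≤ s) (N : ℕ) (hN : 2 ≤ N) :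
    alphaNS N s ≤ alphaNS (N + 1) s :=
  alphaNS_mono_general s N hN
end
end

section
/- For every real s ≥ 1, α_{2,s} = 1/2; equivalently, the infimum over pairs of distinct points x, y ∈ ℝ³ of (‖x‖^s + ‖y‖^s) / (‖x−y‖ · (‖x‖^{s−1} + ‖y‖^{s−1})) equals 1/2. -/
/-! The triangle inequality gives `‖x - y‖ ≤ ‖x‖ + ‖y‖`, and since `t ↦ t ^ (s - 1)` is monotone,
Chebyshev's sum inequality for the two similarly ordered pairs `(‖x‖, ‖y‖)` and
`(‖x‖ ^ (s - 1), ‖y‖ ^ (s - 1))` gives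
`(‖x‖ + ‖y‖) (‖x‖ ^ (s - 1) + ‖y‖ ^ (s - 1)) ≤ 2 (‖x‖ ^ s + ‖y‖ ^ s)`.
Hence every pair ratio is at least `1/2`, with equality for antipodal points `x, -x`. -/

open MeasureTheory

noncomputable section

lemma mul_rpow_sub_one {a : ℝ} (ha : 0 ≤ a) {s : ℝ} (hs : 1 ≤ s) : a * a ^ (s - 1) = a ^ s := by
  conv_rhs => rw [← add_sub_cancel (1 : ℝ) s, Real.rpow_add' ha (by linarith), Real.rpow_one]

lemma add_mul_add_rpow_sub_one_le {a b s : ℝ} (ha : 0 ≤ a) (hb : 0 ≤ b) (hs : 1 ≤ s) :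
    (a + b) * (a ^ (s - 1) + b ^ (s - 1)) ≤ 2 * (a ^ s + b ^ s) := by
  have similarly_ordered : 0 ≤ (a - b) * (a ^ (s - 1) - b ^ (s - 1)) := by
    rcases le_total a b with h | h
    · exact mul_nonneg_of_nonpos_of_nonpos (by linarith)
        (sub_nonpos.2 (Real.rpow_le_rpow ha h (by linarith)))
    · exact mul_nonneg (by linarith) (sub_nonneg.2 (Real.rpow_le_rpow hb h (by linarith)))
  rw [← mul_rpow_sub_one ha hs, ← mul_rpow_sub_one hb hs]
  linarith

section PairRatio

variable {E : Type*} [NormedAddCommGroup E]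

def pairRatio (s : ℝ) (x y : E) : ℝ :=
  (‖x‖ ^ s + ‖y‖ ^ s) / (‖x - y‖ * (‖x‖ ^ (s - 1) + ‖y‖ ^ (s - 1)))

lemma one_half_le_pairRatio {s : ℝ} (hs : 1 ≤ s) {x y : E} (hxy : x ≠ y) :
    1 / 2 ≤ pairRatio s x y := by
  have hpow_sum : 0 < ‖x‖ ^ (s - 1) + ‖y‖ ^ (s - 1) := by
    rcases eq_or_ne x 0 with rfl | hx
    · have hy : y ≠ 0 := hxy.symm
      have := Real.rpow_pos_of_pos (norm_pos_iff.2 hy) (s - 1)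
      positivity
    · have := Real.rpow_pos_of_pos (norm_pos_iff.2 hx) (s - 1)
      positivity
  have hdist : 0 < ‖x - y‖ := norm_pos_iff.2 (sub_ne_zero.2 hxy)
  rw [pairRatio, le_div_iff₀ (by positivity)]
  calc 1 / 2 * (‖x - y‖ * (‖x‖ ^ (s - 1) + ‖y‖ ^ (s - 1)))
      ≤ 1 / 2 * ((‖x‖ + ‖y‖) * (‖x‖ ^ (s - 1) + ‖y‖ ^ (s - 1))) := by
        gcongr; exact norm_sub_le x y
    _ ≤ ‖x‖ ^ s + ‖y‖ ^ s := by
        linarith [add_mul_add_rpow_sub_one_le (norm_nonneg x) (norm_nonneg y) hs]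

lemma pairRatio_neg_self [NormedSpace ℝ E] {s : ℝ} (hs : 1 ≤ s) {x : E} (hx : x ≠ 0) :
    pairRatio s x (-x) = 1 / 2 := by
  have hnorm : 0 < ‖x‖ := norm_pos_iff.2 hx
  have hpow : 0 < ‖x‖ ^ (s - 1) := Real.rpow_pos_of_pos hnorm _
  have hdist : ‖x - -x‖ = 2 * ‖x‖ := by
    rw [sub_neg_eq_add, ← two_smul ℝ x, norm_smul, Real.norm_two]
  rw [pairRatio, norm_neg, hdist, ← mul_rpow_sub_one hnorm.le hs]
  field_simp

lemma isLeast_pairRatio [NormedSpace ℝ E] [Nontrivial E] {s : ℝ} (hs : 1 ≤ s) :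
    IsLeast {c : ℝ | ∃ x y : E, x ≠ y ∧ c = pairRatio s x y} (1 / 2) := by
  have := IsAddTorsionFree.of_isTorsionFree ℝ E
  obtain ⟨x, hx⟩ := exists_ne (0 : E)
  refine ⟨⟨x, -x, self_ne_neg.2 hx, (pairRatio_neg_self hs hx).symm⟩, ?_⟩
  rintro c ⟨x, y, hxy, rfl⟩
  exact one_half_le_pairRatio hs hxy

end PairRatio

lemma alphaNS_two_eq_sInf_pairRatio (s : ℝ) :
    alphaNS 2 s = sInf {c : ℝ | ∃ x y : EuclideanSpace ℝ (Fin 3), x ≠ y ∧ c = pairRatio s x y} := by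
  rw [alphaNS]
  congr 1
  ext c
  simp only [Set.mem_ofPred_eq, Fin.sum_univ_two, Fin.isValue, lt_self_iff_false, ↓reduceIte,
    zero_lt_one, not_lt_zero, add_zero, zero_add, Nat.cast_ofNat, show (2 : ℝ) - 1 = 1 by norm_num,
    one_mul, div_div, pairRatio]
  constructor
  · rintro ⟨x, hx, rfl⟩
    exact ⟨x 0, x 1, hx.ne Fin.zero_ne_one, rfl⟩
  · rintro ⟨x, y, hxy, rfl⟩
    exact ⟨![x, y], injective_pair_iff_ne.2 hxy, rfl⟩

/-- For every `s ≥ 1`, `α_{2,s} = 1/2`; equivalently, the infimum over pairs of distinct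
points `x, y ∈ ℝ³` of `(‖x‖^s + ‖y‖^s)/(‖x-y‖ (‖x‖^{s-1} + ‖y‖^{s-1}))` equals `1/2`. -/
theorem alphaNS_two (s : ℝ) (hs : 1 ≤ s) :
    alphaNS 2 s = 1 / 2 ∧
    sInf { c : ℝ | ∃ x y : EuclideanSpace ℝ (Fin 3), x ≠ y ∧
      c = (‖x‖ ^ s + ‖y‖ ^ s) / (‖x - y‖ * (‖x‖ ^ (s - 1) + ‖y‖ ^ (s - 1))) } = 1 / 2 := by
  have h := (isLeast_pairRatio (E := EuclideanSpace ℝ (Fin 3)) hs).csInf_eq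
  exact ⟨(alphaNS_two_eq_sInf_pairRatio s).trans h, h⟩
end
end

section
/- Let s > 1 be real. Then the map t ↦ t^s + s·t + 1 − s has a unique zero t₀ in the open interval (0,1); the function t ↦ (1+t^s)/(1+t^{s−1}) attains its minimum over [0,1] at t₀; this minimum is strictly less than 1 (in particular it is not attained at the endpoints t = 0 or t = 1); and its value equals (s/(s−1)) · t₀. -/
noncomputable section

/-- Let `s > 1`. The map `t ↦ t^s + s t + 1 - s` has a unique zero `t₀` in `(0,1)`;
the function `t ↦ (1+t^s)/(1+t^{s-1})` attains its minimum over `[0,1]` at `t₀`;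
the minimum is strictly less than `1` (so it is not attained at `t = 0` or `t = 1`);
and its value equals `(s/(s-1)) ⬝ t₀`. -/
theorem min_of_quotient (s : ℝ) (hs : 1 < s) :
    ∃ t₀ ∈ Set.Ioo (0 : ℝ) 1,
      (t₀ ^ s + s * t₀ + 1 - s = 0) ∧
      (∀ t ∈ Set.Ioo (0 : ℝ) 1, t ^ s + s * t + 1 - s = 0 → t = t₀) ∧
      (∀ t ∈ Set.Icc (0 : ℝ) 1,
        (1 + t₀ ^ s) / (1 + t₀ ^ (s - 1)) ≤ (1 + t ^ s) / (1 + t ^ (s - 1))) ∧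
      (1 + t₀ ^ s) / (1 + t₀ ^ (s - 1)) < 1 ∧
      (1 + t₀ ^ s) / (1 + t₀ ^ (s - 1)) = s / (s - 1) * t₀ := by
  have hs0 : (0 : ℝ) < s := by linarith
  have hs1 : (0 : ℝ) < s - 1 := by linarith
  set g : ℝ → ℝ := fun t => t ^ s + s * t + 1 - s with hg
  -- continuity of g
  have hcont_rpow : ∀ p : ℝ, 0 < p → Continuous (fun t : ℝ => t ^ p) := by
    intro p hp
    exact continuous_iff_continuousAt.2 fun x =>
      Real.continuousAt_rpow_const x p (Or.inr hp.le)
  have hgcont : Continuous g :=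
    (((hcont_rpow s hs0).add (continuous_const.mul continuous_id)).add continuous_const).sub
      continuous_const
  -- existence of a zero
  have hg0 : g 0 = 1 - s := by
    simp [hg, Real.zero_rpow (ne_of_gt hs0)]
  have hg1 : g 1 = 2 := by simp [hg]; ring
  have hmem : (0 : ℝ) ∈ Set.Ioo (g 0) (g 1) := by
    rw [hg0, hg1]; constructor <;> [linarith; norm_num]
  obtain ⟨t₀, ht₀mem, hgt₀⟩ :=
    intermediate_value_Ioo (by norm_num : (0:ℝ) ≤ 1) hgcont.continuousOn hmem
  obtain ⟨ht₀0, ht₀1⟩ := ht₀mem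
  -- strict monotonicity of g on [0,1] for uniqueness
  have hgmono : ∀ a b : ℝ, 0 ≤ a → a < b → g a < g b := by
    intro a b ha hab
    have h1 : a ^ s ≤ b ^ s := Real.rpow_le_rpow ha hab.le hs0.le
    have h2 : s * a < s * b := by nlinarith
    simp only [hg]; linarith
  have huniq : ∀ t ∈ Set.Ioo (0 : ℝ) 1, t ^ s + s * t + 1 - s = 0 → t = t₀ := by
    intro t ht hte
    have hte' : g t = 0 := hte
    rcases lt_trichotomy t t₀ with h | h | h
    · have := hgmono t t₀ ht.1.le h; rw [hte', hgt₀] at this; linarith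
    · exact h
    · have := hgmono t₀ t ht₀0.le h; rw [hte', hgt₀] at this; linarith
  -- key identities
  have hkey : t₀ ^ s = s - 1 - s * t₀ := by
    have : t₀ ^ s + s * t₀ + 1 - s = 0 := hgt₀
    linarith
  have ht₀pos : (0:ℝ) < t₀ ^ s := Real.rpow_pos_of_pos ht₀0 s
  have hst₀ : s * t₀ < s - 1 := by nlinarith [hkey]
  have h1t₀ : (0:ℝ) < 1 - t₀ := by linarith
  have hN : 1 + t₀ ^ s = s * (1 - t₀) := by rw [hkey]; ring
  have hsub : t₀ ^ (s - 1) = t₀ ^ s / t₀ := by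
    rw [Real.rpow_sub ht₀0, Real.rpow_one]
  have hD : 1 + t₀ ^ (s - 1) = (s - 1) * (1 - t₀) / t₀ := by
    rw [hsub, hkey]; field_simp; ring
  set m : ℝ := s / (s - 1) * t₀ with hm
  have hval : (1 + t₀ ^ s) / (1 + t₀ ^ (s - 1)) = m := by
    rw [hN, hD, hm]
    field_simp
  have hmlt1 : m < 1 := by
    rw [hm, div_mul_eq_mul_div, div_lt_one hs1]; linarith
  -- the minimality
  set F : ℝ → ℝ := fun t => 1 + t ^ s - m * (1 + t ^ (s - 1)) with hF
  have hFcont : Continuous F :=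
    (continuous_const.add (hcont_rpow s hs0)).sub
      (continuous_const.mul (continuous_const.add (hcont_rpow (s-1) hs1)))
  have hFderiv : ∀ x : ℝ, 0 < x →
      HasDerivAt F (s * x ^ (s - 1) - m * ((s - 1) * x ^ (s - 1 - 1))) x := by
    intro x hx
    have h1 : HasDerivAt (fun t : ℝ => t ^ s) (s * x ^ (s - 1)) x :=
      Real.hasDerivAt_rpow_const (Or.inl hx.ne')
    have h2 : HasDerivAt (fun t : ℝ => t ^ (s - 1)) ((s - 1) * x ^ (s - 1 - 1)) x :=
      Real.hasDerivAt_rpow_const (Or.inl hx.ne')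
    exact ((h1.const_add 1).sub ((h2.const_add 1).const_mul m))
  have hms : m * (s - 1) = s * t₀ := by
    rw [hm]; field_simp
  have hFt₀ : F t₀ = 0 := by
    simp only [hF]
    rw [hN, hD, hm]
    field_simp
    ring
  -- derivative sign rewrite: s * x^(s-1) - m*(s-1)*x^(s-2) = s * x^(s-2) * (x - t₀)
  have hderiv_eq : ∀ x : ℝ, 0 < x →
      s * x ^ (s - 1) - m * ((s - 1) * x ^ (s - 1 - 1)) = s * x ^ (s - 1 - 1) * (x - t₀) := by
    intro x hx
    have : x ^ (s - 1) = x ^ (s - 1 - 1) * x := by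
      rw [← Real.rpow_add_one hx.ne' (s - 1 - 1)]; ring_nf
    rw [this]; linear_combination (-(x ^ (s - 1 - 1))) * hms
  have hF1 : ∀ t ∈ Set.Icc (0:ℝ) t₀, F t₀ ≤ F t := by
    have hA : AntitoneOn F (Set.Icc 0 t₀) := by
      apply antitoneOn_of_deriv_nonpos (convex_Icc 0 t₀) hFcont.continuousOn
      · intro x hx
        rw [interior_Icc] at hx
        exact ((hFderiv x hx.1).differentiableAt).differentiableWithinAt
      · intro x hx
        rw [interior_Icc] at hx
        rw [(hFderiv x hx.1).deriv, hderiv_eq x hx.1]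
        have hp : (0:ℝ) < x ^ (s - 1 - 1) := Real.rpow_pos_of_pos hx.1 _
        exact mul_nonpos_of_nonneg_of_nonpos (mul_pos hs0 hp).le (by linarith [hx.2])
    intro t ht
    exact hA ht (Set.right_mem_Icc.2 ht₀0.le) ht.2
  have hF2 : ∀ t ∈ Set.Icc t₀ (1:ℝ), F t₀ ≤ F t := by
    have hM : MonotoneOn F (Set.Icc t₀ 1) := by
      apply monotoneOn_of_deriv_nonneg (convex_Icc t₀ 1) hFcont.continuousOn
      · intro x hx
        rw [interior_Icc] at hx
        exact ((hFderiv x (ht₀0.trans hx.1)).differentiableAt).differentiableWithinAt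
      · intro x hx
        rw [interior_Icc] at hx
        have hx0 : 0 < x := ht₀0.trans hx.1
        rw [(hFderiv x hx0).deriv, hderiv_eq x hx0]
        have hp : (0:ℝ) < x ^ (s - 1 - 1) := Real.rpow_pos_of_pos hx0 _
        exact mul_nonneg (mul_pos hs0 hp).le (by linarith [hx.1])
    intro t ht
    exact hM (Set.left_mem_Icc.2 ht₀1.le) ht ht.1
  have hmin : ∀ t ∈ Set.Icc (0:ℝ) 1,
      (1 + t₀ ^ s) / (1 + t₀ ^ (s - 1)) ≤ (1 + t ^ s) / (1 + t ^ (s - 1)) := by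
    intro t ht
    have hden : (0:ℝ) < 1 + t ^ (s - 1) := by
      have := Real.rpow_nonneg ht.1 (s - 1); linarith
    rw [hval, le_div_iff₀ hden]
    have hFt : 0 ≤ F t := by
      rcases le_total t t₀ with h | h
      · have := hF1 t ⟨ht.1, h⟩; rw [hFt₀] at this; linarith
      · have := hF2 t ⟨h, ht.2⟩; rw [hFt₀] at this; linarith
    simp only [hF] at hFt; linarith
  exact ⟨t₀, ⟨ht₀0, ht₀1⟩, hgt₀, huniq, hmin, by rw [hval]; exact hmlt1, hval⟩
end
end

section
/- Let γ : (0,∞) × (0,∞) → [0,∞) be a function such that for every fixed u > 0 the map v ↦ γ(u,v) is monotone nondecreasing. Let N ≥ 2 and let x_1, …, x_N be pairwise distinct points of ℝ³ \ {0}. Then for every r > 0, ∑_{j≠k} (γ(‖x_j − x_k‖, r‖x_j‖)/‖x_j‖) · ⟨x_j, x_j − x_k⟩ ≥ 0, where the sum is over all ordered pairs (j,k) with 1 ≤ j,k ≤ N and j ≠ k, and ⟨·,·⟩ is the Euclidean inner product on ℝ³. -/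
noncomputable section

/-!
Group the ordered pairs `(j, k)` and `(k, j)`. Writing `s = ‖x_j‖`, `t = ‖x_k‖` and
`a = γ(‖x_j - x_k‖, r s)`, `b = γ(‖x_j - x_k‖, r t)`, Cauchy–Schwarz `⟨x_j, x_k⟩ ≤ s t`
bounds the contribution of the pair from below by `(a - b)(s - t)`, which is nonnegative
because `γ` is nondecreasing in its second argument.
-/

open RealInnerProductSpace

theorem Finset.sum_sum_nonneg_of_add_swap_nonneg {ι M : Type*} [AddCommGroup M] [LinearOrder M]
    [IsOrderedAddMonoid M] (s : Finset ι) (F : ι → ι → M)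
    (hF : ∀ j ∈ s, ∀ k ∈ s, 0 ≤ F j k + F k j) :
    0 ≤ ∑ j ∈ s, ∑ k ∈ s, F j k := by
  have hsum : 0 ≤ ∑ j ∈ s, ∑ k ∈ s, (F j k + F k j) :=
    sum_nonneg fun j hj => sum_nonneg fun k hk => hF j hj k hk
  simp only [sum_add_distrib] at hsum
  rw [sum_comm (f := fun j k => F k j)] at hsum
  by_contra! hneg
  exact (add_neg hneg hneg).not_ge hsum

theorem MonotoneOn.sub_mul_sub_nonneg {α : Type*} [Ring α] [LinearOrder α] [IsOrderedRing α]
    {f : α → α} {S : Set α} (hf : MonotoneOn f S) {a b : α} (ha : a ∈ S) (hb : b ∈ S) :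
    0 ≤ (f a - f b) * (a - b) := by
  rcases le_total a b with hab | hba
  · exact mul_nonneg_of_nonpos_of_nonpos (sub_nonpos.2 (hf ha hb hab)) (sub_nonpos.2 hab)
  · exact mul_nonneg (sub_nonneg.2 (hf hb ha hba)) (sub_nonneg.2 hba)

section InnerProductSpace

variable {E : Type*} [NormedAddCommGroup E] [InnerProductSpace ℝ E]

theorem inner_sub_add_inner_sub_nonneg {y z : E} {p q : ℝ} (hpq : 0 ≤ p + q)
    (h : 0 ≤ (p * ‖y‖ - q * ‖z‖) * (‖y‖ - ‖z‖)) :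
    0 ≤ p * ⟪y, y - z⟫ + q * ⟪z, z - y⟫ := by
  have hcs := mul_le_mul_of_nonneg_left (real_inner_le_norm y z) hpq
  calc 0 ≤ (p * ‖y‖ - q * ‖z‖) * (‖y‖ - ‖z‖) := h
    _ = p * ‖y‖ ^ 2 + q * ‖z‖ ^ 2 - (p + q) * (‖y‖ * ‖z‖) := by ring
    _ ≤ p * ‖y‖ ^ 2 + q * ‖z‖ ^ 2 - (p + q) * ⟪y, z⟫ := by linarith
    _ = p * ⟪y, y - z⟫ + q * ⟪z, z - y⟫ := by
      rw [inner_sub_right, inner_sub_right, real_inner_self_eq_norm_sq,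
        real_inner_self_eq_norm_sq, real_inner_comm z y]
      ring

theorem div_norm_mul_inner_sub_add_nonneg {g : ℝ → ℝ} (hg : MonotoneOn g (Set.Ioi 0))
    (hg₀ : ∀ s, 0 < s → 0 ≤ g s) {y z : E} (hy : y ≠ 0) (hz : z ≠ 0) :
    0 ≤ g ‖y‖ / ‖y‖ * ⟪y, y - z⟫ + g ‖z‖ / ‖z‖ * ⟪z, z - y⟫ := by
  have hy' : 0 < ‖y‖ := norm_pos_iff.2 hy
  have hz' : 0 < ‖z‖ := norm_pos_iff.2 hz
  apply inner_sub_add_inner_sub_nonneg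
  · exact add_nonneg (div_nonneg (hg₀ _ hy') hy'.le) (div_nonneg (hg₀ _ hz') hz'.le)
  · rw [div_mul_cancel₀ _ hy'.ne', div_mul_cancel₀ _ hz'.ne']
    exact hg.sub_mul_sub_nonneg hy' hz'

end InnerProductSpace

theorem gamma_weighted_sum_nonneg_general (γ : ℝ → ℝ → ℝ)
    (hγnonneg : ∀ u v : ℝ, 0 < u → 0 < v → 0 ≤ γ u v)
    (hγmono : ∀ u : ℝ, 0 < u → ∀ v w : ℝ, 0 < v → v ≤ w → γ u v ≤ γ u w)
    (N : ℕ) (x : Fin N → EuclideanSpace ℝ (Fin 3))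
    (hinj : Function.Injective x) (hne : ∀ j, x j ≠ 0) (r : ℝ) (hr : 0 < r) :
    0 ≤ ∑ j : Fin N, ∑ k : Fin N,
      if j ≠ k then
        γ ‖x j - x k‖ (r * ‖x j‖) / ‖x j‖ * (inner ℝ (x j) (x j - x k) : ℝ)
      else 0 := by
  refine Finset.sum_sum_nonneg_of_add_swap_nonneg _ _ fun j _ k _ => ?_
  rcases eq_or_ne j k with rfl | hjk
  · simp
  have hu : 0 < ‖x j - x k‖ := norm_pos_iff.2 (sub_ne_zero.2 (hinj.ne hjk))
  have hmono : MonotoneOn (fun s => γ ‖x j - x k‖ (r * s)) (Set.Ioi 0) :=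
    fun s hs t _ hst => hγmono _ hu _ _ (mul_pos hr hs) (mul_le_mul_of_nonneg_left hst hr.le)
  simp only [ne_eq, hjk, hjk.symm, not_false_eq_true, if_true, norm_sub_rev (x k)]
  exact div_norm_mul_inner_sub_add_nonneg hmono
    (fun s hs => hγnonneg _ _ hu (mul_pos hr hs)) (hne j) (hne k)

/-- Let `γ : (0,∞) × (0,∞) → [0,∞)` be nondecreasing in its second argument. For pairwise
distinct nonzero points `x_1, …, x_N` of `ℝ³` and any `r > 0`,
`∑_{j ≠ k} (γ(‖x_j - x_k‖, r‖x_j‖)/‖x_j‖) ⟨x_j, x_j - x_k⟩ ≥ 0`. -/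
theorem gamma_weighted_sum_nonneg (γ : ℝ → ℝ → ℝ)
    (hγnonneg : ∀ u v : ℝ, 0 < u → 0 < v → 0 ≤ γ u v)
    (hγmono : ∀ u : ℝ, 0 < u → ∀ v w : ℝ, 0 < v → v ≤ w → γ u v ≤ γ u w)
    (N : ℕ) (hN : 2 ≤ N) (x : Fin N → EuclideanSpace ℝ (Fin 3))
    (hinj : Function.Injective x) (hne : ∀ j, x j ≠ 0) (r : ℝ) (hr : 0 < r) :
    0 ≤ ∑ j : Fin N, ∑ k : Fin N,
      if j ≠ k then
        γ ‖x j - x k‖ (r * ‖x j‖) / ‖x j‖ * (inner ℝ (x j) (x j - x k) : ℝ)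
      else 0 :=
  gamma_weighted_sum_nonneg_general γ hγnonneg hγmono N x hinj hne r hr
end
end

section
/- For all natural numbers k and l, ∫_{−1}^{1} t^k · P_l(t) dt ≥ 0, where P_l is the l-th Legendre polynomial, defined by Rodrigues' formula P_l(t) = (1/(2^l · l!)) · (d/dt)^l [(t² − 1)^l]. Consequently all coefficients c_{k,l} = ((2l+1)/2) ∫_{−1}^{1} t^k P_l(t) dt in the Legendre expansion t^k = ∑_{l=0}^{k} c_{k,l} P_l(t) are nonnegative. -/
noncomputable section

open Polynomial intervalIntegral

/-- The `l`-th Legendre polynomial, via Rodrigues' formula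
`P_l(t) = (1/(2^l l!)) (d/dt)^l [(t² - 1)^l]`. -/
noncomputable def legendreP (l : ℕ) (t : ℝ) : ℝ :=
  (1 / (2 ^ l * (Nat.factorial l : ℝ))) * iteratedDeriv l (fun u : ℝ => (u ^ 2 - 1) ^ l) t

private lemma iteratedDeriv_polyEval (p : ℝ[X]) (n : ℕ) :
    iteratedDeriv n (fun x : ℝ => p.eval x) = fun x => (derivative^[n] p).eval x := by
  induction n with
  | zero => simp
  | succ n ih =>
    rw [iteratedDeriv_succ, ih, Function.iterate_succ_apply']
    ext x
    exact Polynomial.deriv (p := derivative^[n] p)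

private lemma polyIntegrable (p : ℝ[X]) :
    IntervalIntegrable (fun t : ℝ => p.eval t) MeasureTheory.volume (-1) 1 :=
  (p.continuous_aeval).intervalIntegrable _ _

private lemma parts (p q : ℝ[X]) (h1 : q.eval 1 = 0) (hm1 : q.eval (-1) = 0) :
    ∫ t in (-1:ℝ)..1, p.eval t * (derivative q).eval t
      = - ∫ t in (-1:ℝ)..1, (derivative p).eval t * q.eval t := by
  rw [integral_mul_deriv_eq_deriv_mul (u := fun t => p.eval t) (v := fun t => q.eval t)
      (fun x _ => p.hasDerivAt x) (fun x _ => q.hasDerivAt x)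
      (polyIntegrable _) (polyIntegrable _)]
  rw [h1, hm1]
  ring

private lemma ibp_iter (g : ℝ[X]) (l : ℕ)
    (hg : ∀ j < l, (derivative^[j] g).eval 1 = 0 ∧ (derivative^[j] g).eval (-1) = 0) :
    ∀ p : ℝ[X], ∫ t in (-1:ℝ)..1, p.eval t * (derivative^[l] g).eval t
      = (-1)^l * ∫ t in (-1:ℝ)..1, (derivative^[l] p).eval t * g.eval t := by
  induction l with
  | zero => intro p; simp
  | succ l ih =>
    intro p
    have hq := hg l (Nat.lt_succ_self l)
    rw [Function.iterate_succ_apply']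
    rw [parts p (derivative^[l] g) hq.1 hq.2]
    rw [ih (fun j hj => hg j (hj.trans (Nat.lt_succ_self l))) (derivative p)]
    rw [← Function.iterate_succ_apply]
    ring

private lemma boundary_vanish (l : ℕ) :
    ∀ j ≤ l, ∃ r : ℝ[X], derivative^[j] ((X^2 - 1)^l) = (X^2 - 1)^(l - j) * r := by
  intro j
  induction j with
  | zero => intro _; exact ⟨1, by simp⟩
  | succ j ih =>
    intro hj
    obtain ⟨r, hr⟩ := ih (Nat.le_of_succ_le hj)
    refine ⟨(C ((l - j : ℕ) : ℝ)) * (2 * X) * r + (X^2 - 1) * derivative r, ?_⟩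
    rw [Function.iterate_succ_apply', hr]
    have hlj : l - j = (l - (j+1)) + 1 := by omega
    rw [derivative_mul, derivative_pow, hlj]
    simp only [derivative_sub, derivative_X_pow, derivative_one, Nat.cast_ofNat, map_ofNat]
    push_cast
    ring

private lemma eval_boundary (l : ℕ) (j : ℕ) (hj : j < l) (t : ℝ) (ht : t^2 = 1) :
    (derivative^[j] ((X^2 - 1)^l : ℝ[X])).eval t = 0 := by
  obtain ⟨r, hr⟩ := boundary_vanish l j (le_of_lt hj)
  rw [hr]
  have : l - j ≠ 0 := by omega
  simp [ht, zero_pow this]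

private lemma key_nonneg (m l : ℕ) :
    0 ≤ ∫ t in (-1:ℝ)..1, t^m * (1 - t^2)^l := by
  rcases Nat.even_or_odd m with he | ho
  · apply intervalIntegral.integral_nonneg (by norm_num)
    intro u hu
    apply mul_nonneg (he.pow_nonneg u)
    apply pow_nonneg
    nlinarith [hu.1, hu.2]
  · have h : (∫ t in (-1:ℝ)..1, (fun t => t^m * (1 - t^2)^l) (-t))
        = ∫ t in (-1:ℝ)..1, t^m * (1 - t^2)^l := by
      rw [intervalIntegral.integral_comp_neg (fun t => t^m * (1 - t^2)^l)]
      norm_num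
    have h2 : ∀ t : ℝ, (fun t => t^m * (1 - t^2)^l) (-t) = -(t^m * (1 - t^2)^l) := by
      intro t
      simp only [ho.neg_pow, neg_sq, neg_mul]
    simp only [h2] at h
    rw [intervalIntegral.integral_neg] at h
    linarith

/-- For all `k, l ∈ ℕ`, `∫_{-1}^{1} t^k P_l(t) dt ≥ 0`; consequently all coefficients
`c_{k,l} = ((2l+1)/2) ∫_{-1}^1 t^k P_l(t) dt` in the Legendre expansion of `t^k` are
nonnegative. -/
theorem legendre_moment_nonneg (k l : ℕ) :
    0 ≤ ∫ t in (-1 : ℝ)..1, t ^ k * legendreP l t ∧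
    0 ≤ (2 * (l : ℝ) + 1) / 2 * ∫ t in (-1 : ℝ)..1, t ^ k * legendreP l t := by
  have key : 0 ≤ ∫ t in (-1 : ℝ)..1, t ^ k * legendreP l t := by
    have heq : ∀ t : ℝ, legendreP l t
        = (1 / (2 ^ l * (Nat.factorial l : ℝ)))
          * (derivative^[l] ((X^2 - 1)^l : ℝ[X])).eval t := by
      intro t
      unfold legendreP
      congr 1
      have : (fun u : ℝ => (u ^ 2 - 1) ^ l) = fun u => (((X^2 - 1)^l : ℝ[X])).eval u := by
        ext u; simp
      rw [this, iteratedDeriv_polyEval]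
    simp_rw [heq, mul_comm (1 / (2 ^ l * (Nat.factorial l : ℝ))), ← mul_assoc]
    rw [intervalIntegral.integral_mul_const]
    apply mul_nonneg
    · have hx : ∀ t : ℝ, t ^ k = ((X^k : ℝ[X])).eval t := by intro t; simp
      simp_rw [hx]
      rw [ibp_iter ((X^2-1)^l) l
        (fun j hj => ⟨eval_boundary l j hj 1 (by norm_num),
                      eval_boundary l j hj (-1) (by norm_num)⟩) (X^k)]
      rw [iterate_derivative_X_pow_eq_C_mul]
      have : ∀ t : ℝ, (C ((Nat.descFactorial k l : ℝ)) * X ^ (k - l) : ℝ[X]).eval t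
          * (((X^2-1)^l : ℝ[X])).eval t
          = (Nat.descFactorial k l : ℝ) * (t ^ (k-l) * (t^2 - 1)^l) := by
        intro t; simp; ring
      simp_rw [this]
      rw [intervalIntegral.integral_const_mul, ← mul_assoc]
      have h1 : ((-1:ℝ))^l * (-1:ℝ)^l = 1 := by
        rw [← pow_add]; exact Even.neg_one_pow ⟨l, rfl⟩
      have hint : (∫ t in (-1:ℝ)..1, t ^ (k-l) * (t^2 - 1)^l)
          = (-1:ℝ)^l * ∫ t in (-1:ℝ)..1, t ^ (k-l) * (1 - t^2)^l := by
        rw [← intervalIntegral.integral_const_mul]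
        apply intervalIntegral.integral_congr
        intro t _
        have hpow : (t^2-1)^l = ((-1:ℝ))^l * (1 - t^2)^l := by
          rw [← mul_pow]; ring_nf
        simp only [hpow]; ring
      rw [hint]
      set d : ℝ := (Nat.descFactorial k l : ℝ) with hd
      set I : ℝ := ∫ t in (-1:ℝ)..1, t ^ (k-l) * (1 - t^2)^l with hI
      have : (-1:ℝ)^l * d * ((-1:ℝ)^l * I) = d * I := by
        calc (-1:ℝ)^l * d * ((-1:ℝ)^l * I) = ((-1:ℝ)^l * (-1:ℝ)^l) * (d * I) := by ring
          _ = d * I := by rw [h1, one_mul]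
      rw [this]
      exact mul_nonneg (Nat.cast_nonneg _) (key_nonneg _ _)
    · positivity
  refine ⟨key, mul_nonneg (by positivity) key⟩
end
end
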